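/- Let α > β > γ > 0 be reals, let f₁,g₁,h₁,f₂,g₂,h₂ : ℤ → ℝ satisfy the discrete functional equations, and let r : ℤ×ℤ → ℝ³ be the associated discrete ellipsoid binet. Then all pairs of dual edges are orthogonal: for every (m₁,m₂) ∈ ℤ², the inner product of r(m₁+1,m₂) − r(m₁−1,m₂) with r(m₁,m₂+1) − r(m₁,m₂−1) is zero. (Together with planarity of elementary quadrilaterals this says that r is a principal binet.) -/

import Mathlib

open Real

noncomputable def pt (x y z : ℝ) : EuclideanSpace ℝ (Fin 3) :=
  (WithLp.equiv 2 (Fin 3 → ℝ)).symm ![x, y, z]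

/-!
Each coordinate of `r` is a product `c · u(m₁) · v(m₂)`, so the inner product of the two dual
edges through `(m₁, m₂)` is `Σ c² · (u(m₁)(u(m₁+1) - u(m₁-1))) · (v(m₂)(v(m₂+1) - v(m₂-1)))`.
Subtracting the functional equations at `m - 1` from those at `m` shows that the factors for
`g` and `h` are `±` the factors for `f`, so the inner product is a multiple of
`α/((α-β)(α-γ)) - β/((α-β)(β-γ)) + γ/((α-γ)(β-γ))`, which vanishes.
-/

lemma pt_sub (x y z x' y' z' : ℝ) :
    pt x y z - pt x' y' z' = pt (x - x') (y - y') (z - z') := by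
  ext i
  fin_cases i <;> simp [pt]

lemma inner_pt (x y z x' y' z' : ℝ) :
    inner ℝ (pt x y z) (pt x' y' z') = x * x' + y * y' + z * z' := by
  simp only [pt, WithLp.equiv_symm_apply, PiLp.inner_apply, RCLike.inner_apply, ringHom_apply,
    Fin.sum_univ_three, Fin.isValue, Matrix.cons_val_zero, Matrix.cons_val_one, Matrix.cons_val]
  ring

/-- `a m * (a (m + 1) - a (m - 1))` is the backward difference of `m ↦ a m * a (m + 1)`. -/
lemma mul_sub_eq_of_mul_succ_add_mul_succ_eq_const (a b : ℤ → ℝ) (κ c : ℝ)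
    (h : ∀ m : ℤ, a m * a (m + 1) + κ * (b m * b (m + 1)) = c) (m : ℤ) :
    κ * (b m * (b (m + 1) - b (m - 1))) = -(a m * (a (m + 1) - a (m - 1))) := by
  have hprev := h (m - 1)
  rw [sub_add_cancel] at hprev
  linear_combination h m - hprev

lemma inner_dual_edges_of_product_form (a b c : ℝ) (f₁ g₁ h₁ f₂ g₂ h₂ : ℤ → ℝ)
    (r : ℤ → ℤ → EuclideanSpace ℝ (Fin 3))
    (hr : ∀ m₁ m₂ : ℤ, r m₁ m₂ =
      pt (a * f₁ m₁ * f₂ m₂) (b * g₁ m₁ * g₂ m₂) (c * h₁ m₁ * h₂ m₂))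
    (m₁ m₂ : ℤ) :
    inner ℝ (r (m₁ + 1) m₂ - r (m₁ - 1) m₂) (r m₁ (m₂ + 1) - r m₁ (m₂ - 1)) =
      a ^ 2 * (f₁ m₁ * (f₁ (m₁ + 1) - f₁ (m₁ - 1))) * (f₂ m₂ * (f₂ (m₂ + 1) - f₂ (m₂ - 1))) +
      b ^ 2 * (g₁ m₁ * (g₁ (m₁ + 1) - g₁ (m₁ - 1))) * (g₂ m₂ * (g₂ (m₂ + 1) - g₂ (m₂ - 1))) +
      c ^ 2 * (h₁ m₁ * (h₁ (m₁ + 1) - h₁ (m₁ - 1))) * (h₂ m₂ * (h₂ (m₂ + 1) - h₂ (m₂ - 1))) := by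
  simp only [hr, pt_sub, inner_pt]
  ring

/-- The sum of the residues of `x / ((x - α)(x - β)(x - γ))`, which is `0`. -/
lemma div_sub_div_add_div_eq_zero {α β γ : ℝ} (hαβ : α ≠ β) (hβγ : β ≠ γ) (hαγ : α ≠ γ) :
    α / ((α - β) * (α - γ)) - β / ((α - β) * (β - γ)) + γ / ((α - γ) * (β - γ)) = 0 := by
  have := sub_ne_zero.2 hαβ
  have := sub_ne_zero.2 hβγ
  have := sub_ne_zero.2 hαγ
  field_simp
  ring

theorem binet_dual_edges_orthogonal
    (α β γ : ℝ) (hαβ : β < α) (hβγ : γ < β) (hγ : 0 < γ)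
    (f₁ g₁ h₁ f₂ g₂ h₂ : ℤ → ℝ)
    (hfe₁ : ∀ m : ℤ, f₁ m * f₁ (m + 1) + g₁ m * g₁ (m + 1) = α - β)
    (hfe₂ : ∀ m : ℤ, f₁ m * f₁ (m + 1) + h₁ m * h₁ (m + 1) = α - γ)
    (hfe₃ : ∀ m : ℤ, f₂ m * f₂ (m + 1) - g₂ m * g₂ (m + 1) = α - β)
    (hfe₄ : ∀ m : ℤ, f₂ m * f₂ (m + 1) + h₂ m * h₂ (m + 1) = α - γ)
    (r : ℤ → ℤ → EuclideanSpace ℝ (Fin 3))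
    (hr : ∀ m₁ m₂ : ℤ, r m₁ m₂ =
      pt (Real.sqrt (α / ((α - β) * (α - γ))) * f₁ m₁ * f₂ m₂)
        (Real.sqrt (β / ((α - β) * (β - γ))) * g₁ m₁ * g₂ m₂)
        (Real.sqrt (γ / ((α - γ) * (β - γ))) * h₁ m₁ * h₂ m₂))
    (m₁ m₂ : ℤ) :
    (inner ℝ (r (m₁ + 1) m₂ - r (m₁ - 1) m₂)
      (r m₁ (m₂ + 1) - r m₁ (m₂ - 1)) : ℝ) = 0 := by
  have hα : 0 < α := by linarith
  have hαβ' : 0 < α - β := sub_pos.2 hαβ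
  have hαγ' : 0 < α - γ := sub_pos.2 (hβγ.trans hαβ)
  have hβγ' : 0 < β - γ := sub_pos.2 hβγ
  have hg₁ := mul_sub_eq_of_mul_succ_add_mul_succ_eq_const f₁ g₁ 1 _ (by simpa using hfe₁) m₁
  have hh₁ := mul_sub_eq_of_mul_succ_add_mul_succ_eq_const f₁ h₁ 1 _ (by simpa using hfe₂) m₁
  have hg₂ := mul_sub_eq_of_mul_succ_add_mul_succ_eq_const f₂ g₂ (-1) _
    (by simpa [← sub_eq_add_neg] using hfe₃) m₂
  have hh₂ := mul_sub_eq_of_mul_succ_add_mul_succ_eq_const f₂ h₂ 1 _ (by simpa using hfe₄) m₂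
  have hsum := div_sub_div_add_div_eq_zero hαβ.ne' hβγ.ne' (hβγ.trans hαβ).ne'
  rw [inner_dual_edges_of_product_form _ _ _ f₁ g₁ h₁ f₂ g₂ h₂ r hr,
    sq_sqrt (div_pos hα (mul_pos hαβ' hαγ')).le,
    sq_sqrt (div_pos (hγ.trans hβγ) (mul_pos hαβ' hβγ')).le,
    sq_sqrt (div_pos hγ (mul_pos hαγ' hβγ')).le]
  set F₁ := f₁ m₁ * (f₁ (m₁ + 1) - f₁ (m₁ - 1))
  set F₂ := f₂ m₂ * (f₂ (m₂ + 1) - f₂ (m₂ - 1))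
  set B := β / ((α - β) * (β - γ))
  set C := γ / ((α - γ) * (β - γ))
  linear_combination F₁ * F₂ * hsum + B * (g₂ m₂ * (g₂ (m₂ + 1) - g₂ (m₂ - 1))) * hg₁
    + B * F₁ * hg₂ + C * (h₂ m₂ * (h₂ (m₂ + 1) - h₂ (m₂ - 1))) * hh₁ - C * F₁ * hh₂
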